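/- (Channel sandwich / information processing lower bound on capacity) Let W : X → (Y → ℝ≥0) be a channel on finite alphabets, and suppose there exists an encoder-decoder pair transmitting a uniformly distributed message W over a message set of size 2^K through W such that H(W | Ŵ) ≤ Δ. Then the capacity satisfies C(W) ≥ K − Δ. -/

import Mathlib

/-!
A uniform `K`-bit message has entropy `K`, so `K - H(W | Ŵ) = H(W) + H(Ŵ) - H(W, Ŵ)` is the
mutual information between the message and its decoding. Grouping messages by codeword rewrites
it as `I(Q_enc, dec ∘ W)`, the information that the pushforward input `Q_enc` carries through the
channel followed by the decoder. The log-sum inequality on each decoder fibre is the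
data-processing inequality `I(Q_enc, dec ∘ W) ≤ I(Q_enc, W)`, and the latter is at most `C(W)`.
-/

/-- Mutual information `I(Q, W)` of an input pmf `Q` over channel `W`. -/
noncomputable def mutualInfo {X Y : Type*} [Fintype X] [Fintype Y]
    (Q : X → ℝ) (W : X → Y → ℝ) : ℝ :=
  ∑ x, ∑ y, Q x * W x y *
    Real.logb 2 ((Q x * W x y) / (Q x * ∑ x', Q x' * W x' y))

/-- Shannon capacity `C(W) = sup_Q I(Q, W)`. -/
noncomputable def capacity {X Y : Type*} [Fintype X] [Fintype Y]
    (W : X → Y → ℝ) : ℝ :=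
  sSup {r | ∃ Q : X → ℝ, (∀ x, 0 ≤ Q x) ∧ (∑ x, Q x) = 1 ∧ r = mutualInfo Q W}

/-- Shannon entropy (base 2) of a finite nonnegative vector (e.g. a pmf). -/
noncomputable def ent {α : Type*} [Fintype α] (f : α → ℝ) : ℝ :=
  -∑ a, f a * Real.logb 2 (f a)

open Finset Real

theorem mul_log_add_sub_le_mul_log_div {a b t : ℝ} (ha : 0 ≤ a) (hb : 0 ≤ b)
    (hab : b = 0 → a = 0) (ht : 0 < t) :
    a * log t + a - t * b ≤ a * log (a / b) := by
  rcases ha.eq_or_lt with rfl | ha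
  · simpa using mul_nonneg ht.le hb
  have hb : 0 < b := hb.lt_of_ne fun h => ha.ne' (hab h.symm)
  have key := mul_le_mul_of_nonneg_left
    (one_sub_inv_le_log_of_pos (show 0 < a / b / t by positivity)) ha.le
  rw [log_div (by positivity) ht.ne', show a * (1 - (a / b / t)⁻¹) = a - t * b by
    field_simp] at key
  linarith

theorem mul_log_div_le_sum_mul_log_div {ι : Type*} (s : Finset ι) {a b : ι → ℝ}
    (ha : ∀ i ∈ s, 0 ≤ a i) (hb : ∀ i ∈ s, 0 ≤ b i) (hab : ∀ i ∈ s, b i = 0 → a i = 0) :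
    (∑ i ∈ s, a i) * log ((∑ i ∈ s, a i) / ∑ i ∈ s, b i) ≤ ∑ i ∈ s, a i * log (a i / b i) := by
  set A := ∑ i ∈ s, a i
  set B := ∑ i ∈ s, b i
  by_cases hA : A = 0
  · have ha0 := (sum_eq_zero_iff_of_nonneg ha).1 hA
    rw [hA, zero_mul, sum_eq_zero fun i hi => by rw [ha0 i hi, zero_mul]]
  have hApos : 0 < A := (sum_nonneg ha).lt_of_ne' hA
  have hBpos : 0 < B := (sum_nonneg hb).lt_of_ne' fun hB => hA <| sum_eq_zero fun i hi =>
    hab i hi ((sum_eq_zero_iff_of_nonneg hb).1 hB i hi)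
  calc A * log (A / B) = ∑ i ∈ s, (a i * log (A / B) + a i - A / B * b i) := by
        rw [sum_sub_distrib, sum_add_distrib, ← sum_mul, ← mul_sum]
        field_simp
        ring
    _ ≤ ∑ i ∈ s, a i * log (a i / b i) := sum_le_sum fun i hi =>
        mul_log_add_sub_le_mul_log_div (ha i hi) (hb i hi) (hab i hi) (by positivity)

theorem mul_logb_div_le_sum_mul_logb_div {ι : Type*} (s : Finset ι) {a b : ι → ℝ}
    (ha : ∀ i ∈ s, 0 ≤ a i) (hb : ∀ i ∈ s, 0 ≤ b i) (hab : ∀ i ∈ s, b i = 0 → a i = 0) :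
    (∑ i ∈ s, a i) * logb 2 ((∑ i ∈ s, a i) / ∑ i ∈ s, b i)
      ≤ ∑ i ∈ s, a i * logb 2 (a i / b i) := by
  simp only [logb, ← mul_div_assoc, ← sum_div]
  exact div_le_div_of_nonneg_right (mul_log_div_le_sum_mul_log_div s ha hb hab)
    (log_pos one_lt_two).le

theorem ent_const_inv_card (α : Type*) [Fintype α] :
    ent (fun _ : α => 1 / (Fintype.card α : ℝ)) = logb 2 (Fintype.card α) := by
  rcases (Nat.cast_nonneg (α := ℝ) (Fintype.card α)).eq_or_lt with h | h
  · simp [ent, ← h]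
  · simp [ent, logb_inv, h.ne']

section Pushforward

variable {α β : Type*} [Fintype α] [DecidableEq β]

def pushforward (u : α → ℝ) (f : α → β) (b : β) : ℝ :=
  ∑ a ∈ univ.filter (fun a => f a = b), u a

theorem pushforward_nonneg {u : α → ℝ} (hu : ∀ a, 0 ≤ u a) (f : α → β) (b : β) :
    0 ≤ pushforward u f b :=
  sum_nonneg fun a _ => hu a

theorem sum_pushforward_mul [Fintype β] (u : α → ℝ) (f : α → β) (F : β → ℝ) :
    ∑ b, pushforward u f b * F b = ∑ a, u a * F (f a) := by
  rw [← sum_fiberwise univ f]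
  refine sum_congr rfl fun b _ => ?_
  rw [pushforward, sum_mul]
  exact sum_congr rfl fun a ha => by rw [(mem_filter.1 ha).2]

theorem sum_pushforward [Fintype β] (u : α → ℝ) (f : α → β) :
    ∑ b, pushforward u f b = ∑ a, u a := by
  simpa using sum_pushforward_mul u f 1

end Pushforward

section Channel

variable {X Y : Type*} [Fintype X] [Fintype Y]

theorem mutualInfo_eq_sum_mul_sum (Q : X → ℝ) (W : X → Y → ℝ) :
    mutualInfo Q W = ∑ x, Q x * ∑ y, W x y * logb 2 (W x y / ∑ x', Q x' * W x' y) := by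
  refine sum_congr rfl fun x _ => ?_
  rcases eq_or_ne (Q x) 0 with hQ | hQ
  · simp [hQ]
  · rw [mul_sum]
    exact sum_congr rfl fun y _ => by rw [mul_div_mul_left _ _ hQ, mul_assoc]

theorem mutualInfo_pushforward {M : Type*} [Fintype M] [DecidableEq X]
    (u : M → ℝ) (g : M → X) (W : X → Y → ℝ) :
    mutualInfo (pushforward u g) W = mutualInfo u (fun m => W (g m)) := by
  simp only [mutualInfo_eq_sum_mul_sum, sum_pushforward_mul u g]

theorem mutualInfo_pushforward_le {Z : Type*} [Fintype Z] [DecidableEq Z]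
    {Q : X → ℝ} {W : X → Y → ℝ} (hQ : ∀ x, 0 ≤ Q x) (hW : ∀ x y, 0 ≤ W x y) (f : Y → Z) :
    mutualInfo Q (fun x => pushforward (W x) f) ≤ mutualInfo Q W := by
  dsimp only [mutualInfo]
  gcongr with x
  rw [← sum_fiberwise univ f]
  gcongr with z
  have hQW : ∀ y, Q x * W x y ≤ ∑ x', Q x' * W x' y := fun y =>
    single_le_sum (f := fun x' => Q x' * W x' y) (fun x' _ => mul_nonneg (hQ x') (hW x' y))
      (mem_univ x)
  have hout : Q x * ∑ x', Q x' * pushforward (W x') f z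
      = ∑ y ∈ univ.filter (fun y => f y = z), Q x * ∑ x', Q x' * W x' y := by
    simp only [pushforward, mul_sum]
    exact sum_comm
  rw [hout, pushforward, mul_sum]
  refine mul_logb_div_le_sum_mul_logb_div _ (fun y _ => mul_nonneg (hQ x) (hW x y))
    (fun y _ => mul_nonneg (hQ x) ((mul_nonneg (hQ x) (hW x y)).trans (hQW y))) fun y _ h => ?_
  rcases mul_eq_zero.1 h with h | h
  · rw [h, zero_mul]
  · exact le_antisymm (h ▸ hQW y) (mul_nonneg (hQ x) (hW x y))

theorem mutualInfo_eq_ent_add_ent_sub_ent {u : X → ℝ} {V : X → Y → ℝ} (hu : ∀ x, 0 ≤ u x)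
    (hV0 : ∀ x y, 0 ≤ V x y) (hV1 : ∀ x, ∑ y, V x y = 1) :
    mutualInfo u V = ent u + ent (fun y => ∑ x, u x * V x y)
      - ent (fun p : X × Y => u p.1 * V p.1 p.2) := by
  set q := fun y => ∑ x, u x * V x y
  have hsplit : ∀ x y, u x * V x y * logb 2 (u x * V x y / (u x * q y))
      = u x * V x y * logb 2 (u x * V x y) - u x * V x y * logb 2 (u x)
        - u x * V x y * logb 2 (q y) := by
    intro x y
    rcases eq_or_ne (u x * V x y) 0 with h | h
    · simp [h]
    have hq : q y ≠ 0 := (lt_of_lt_of_le ((mul_nonneg (hu x) (hV0 x y)).lt_of_ne' h)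
      (single_le_sum (f := fun x' => u x' * V x' y)
        (fun x' _ => mul_nonneg (hu x') (hV0 x' y)) (mem_univ x))).ne'
    rw [logb_div h (mul_ne_zero (left_ne_zero_of_mul h) hq), logb_mul (left_ne_zero_of_mul h) hq]
    ring
  have hu_log : ∑ x, ∑ y, u x * V x y * logb 2 (u x) = ∑ x, u x * logb 2 (u x) := by
    simp only [← sum_mul, ← mul_sum, hV1, mul_one]
  have hq_log : ∑ x, ∑ y, u x * V x y * logb 2 (q y) = ∑ y, q y * logb 2 (q y) := by
    rw [sum_comm]
    simp only [← sum_mul, q]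
  change ∑ x, ∑ y, u x * V x y * logb 2 (u x * V x y / (u x * q y)) = _
  simp only [hsplit, sum_sub_distrib, hu_log, hq_log, ent, Fintype.sum_prod_type]
  ring

theorem mutualInfo_le_sum_div_log_two {Q : X → ℝ} {W : X → Y → ℝ} (hQ : ∀ x, 0 ≤ Q x)
    (hW : ∀ x y, 0 ≤ W x y) :
    mutualInfo Q W ≤ (∑ x, ∑ y, W x y) / log 2 := by
  rw [mutualInfo_eq_sum_mul_sum, sum_div]
  refine sum_le_sum fun x _ => ?_
  rw [mul_sum, sum_div]
  refine sum_le_sum fun y _ => ?_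
  set out := ∑ x', Q x' * W x' y
  have hout : 0 ≤ out := sum_nonneg fun x' _ => mul_nonneg (hQ x') (hW x' y)
  have hQW : Q x * W x y ≤ out :=
    single_le_sum (f := fun x' => Q x' * W x' y) (fun x' _ => mul_nonneg (hQ x') (hW x' y))
      (mem_univ x)
  have hlog : logb 2 (W x y / out) ≤ W x y / out / log 2 :=
    div_le_div_of_nonneg_right (log_le_self (div_nonneg (hW x y) hout)) (log_pos one_lt_two).le
  calc Q x * (W x y * logb 2 (W x y / out))
      ≤ Q x * (W x y * (W x y / out / log 2)) := by gcongr; exacts [hQ x, hW x y]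
    _ = W x y * (Q x * W x y / out) / log 2 := by ring
    _ ≤ W x y * 1 / log 2 := by
        gcongr
        · exact hW x y
        · exact div_le_one_of_le₀ hQW hout
    _ = W x y / log 2 := by rw [mul_one]

theorem mutualInfo_le_capacity {Q : X → ℝ} {W : X → Y → ℝ} (hW : ∀ x y, 0 ≤ W x y)
    (hQ0 : ∀ x, 0 ≤ Q x) (hQ1 : ∑ x, Q x = 1) :
    mutualInfo Q W ≤ capacity W :=
  le_csSup ⟨_, by rintro _ ⟨Q', hQ', -, rfl⟩; exact mutualInfo_le_sum_div_log_two hQ' hW⟩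
    ⟨Q, hQ0, hQ1, rfl⟩

end Channel

open Finset in
/-- The joint pmf of (message, decoded message) is
`r(w, ŵ) = 2^{-K} ∑_{y : dec y = ŵ} W(y | enc w)`, so `hfano` reads `H(W, Ŵ) - H(Ŵ) ≤ Δ`. -/
theorem capacity_ge_of_fano_general {X Y : Type*} [Fintype X] [Fintype Y]
    (K : ℕ) (W : X → Y → ℝ)
    (hW0 : ∀ x y, 0 ≤ W x y) (hW1 : ∀ x, ∑ y, W x y = 1)
    (enc : (Fin K → Bool) → X) (dec : Y → (Fin K → Bool)) (Δ : ℝ)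
    (hfano :
      ent (fun wp : (Fin K → Bool) × (Fin K → Bool) =>
          (1 / 2 ^ K) * ∑ y ∈ univ.filter (fun y => dec y = wp.2), W (enc wp.1) y)
        - ent (fun what : Fin K → Bool =>
          ∑ w : Fin K → Bool,
            (1 / 2 ^ K) * ∑ y ∈ univ.filter (fun y => dec y = what), W (enc w) y)
      ≤ Δ) :
    (K : ℝ) - Δ ≤ capacity W := by
  classical
  let u : (Fin K → Bool) → ℝ := fun _ => 1 / 2 ^ K
  have hcard : (Fintype.card (Fin K → Bool) : ℝ) = 2 ^ K := by simp
  have hu0 : ∀ w, 0 ≤ u w := fun _ => by positivity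
  have hu_ent : ent u = K := by
    have := ent_const_inv_card (Fin K → Bool)
    rwa [hcard, logb_pow, logb_self_eq_one one_lt_two, mul_one] at this
  have hu_sum : ∑ x, pushforward u enc x = 1 := by
    rw [sum_pushforward, sum_const, card_univ, nsmul_eq_mul, hcard]
    field_simp
  have hfano' : ent (fun p : (Fin K → Bool) × (Fin K → Bool) =>
        u p.1 * pushforward (W (enc p.1)) dec p.2)
      - ent (fun n => ∑ m, u m * pushforward (W (enc m)) dec n) ≤ Δ := hfano
  calc (K : ℝ) - Δ
      ≤ mutualInfo u (fun w => pushforward (W (enc w)) dec) := by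
        rw [mutualInfo_eq_ent_add_ent_sub_ent hu0 (fun w => pushforward_nonneg (hW0 _) dec)
          (fun w => (sum_pushforward _ dec).trans (hW1 _)), hu_ent]
        linarith [hfano']
    _ = mutualInfo (pushforward u enc) (fun x => pushforward (W x) dec) :=
        (mutualInfo_pushforward u enc fun x => pushforward (W x) dec).symm
    _ ≤ mutualInfo (pushforward u enc) W :=
        mutualInfo_pushforward_le (pushforward_nonneg hu0 enc) hW0 dec
    _ ≤ capacity W := mutualInfo_le_capacity hW0 (pushforward_nonneg hu0 enc) hu_sum

open Finset in
/-- if a uniformly distributed `K`-bit message sent through the channel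
`W` via encoder `enc` and decoder `dec` satisfies `H(W | Ŵ) ≤ Δ`, then
`C(W) ≥ K − Δ`. Here the joint pmf of (message, decoded message) is
`r(w, ŵ) = 2^{-K} ∑_{y : dec y = ŵ} W(y | enc w)`. -/
theorem capacity_ge_of_fano {X Y : Type*} [Fintype X] [Fintype Y] [DecidableEq Y]
    (K : ℕ) (W : X → Y → ℝ)
    (hW0 : ∀ x y, 0 ≤ W x y) (hW1 : ∀ x, ∑ y, W x y = 1)
    (enc : (Fin K → Bool) → X) (dec : Y → (Fin K → Bool)) (Δ : ℝ)
    (hfano :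
      ent (fun wp : (Fin K → Bool) × (Fin K → Bool) =>
          (1 / 2 ^ K) * ∑ y ∈ univ.filter (fun y => dec y = wp.2), W (enc wp.1) y)
        - ent (fun what : Fin K → Bool =>
          ∑ w : Fin K → Bool,
            (1 / 2 ^ K) * ∑ y ∈ univ.filter (fun y => dec y = what), W (enc w) y)
      ≤ Δ) :
    (K : ℝ) - Δ ≤ capacity W :=
  capacity_ge_of_fano_general K W hW0 hW1 enc dec Δ hfano
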